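/- Let n = 3, a₁ = -1, a₃ = 1, a₂ ∈ ℝ. Suppose φ ∈ H¹(ℝ³)\{0} satisfies P(φ) = 0, where P(φ) = ‖∇φ‖² + (1/2)‖φ‖³_{L³} - (3a₂/4)‖φ‖⁴_{L⁴} - (9/10)‖φ‖⁵_{L⁵}. Then ∂²_λ S(φ^λ)|_{λ=1} = ‖∇φ‖² + (1/4)‖φ‖³_{L³} - (3a₂/2)‖φ‖⁴_{L⁴} - (63/20)‖φ‖⁵_{L⁵} = -‖∇φ‖² - (3/4)‖φ‖³_{L³} - (27/20)‖φ‖⁵_{L⁵} < 0. -/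

import Mathlib

open MeasureTheory

noncomputable def gradSq (n : ℕ) (v : EuclideanSpace ℝ (Fin n) → ℝ) : ℝ :=
  ∫ x, ‖fderiv ℝ v x‖^2

noncomputable def lpP (n : ℕ) (p : ℕ) (v : EuclideanSpace ℝ (Fin n) → ℝ) : ℝ :=
  ∫ x, |v x| ^ p

/-- Nehari functional `K`. -/
noncomputable def Kf (n : ℕ) (a₂ : ℝ) (v : EuclideanSpace ℝ (Fin n) → ℝ) : ℝ :=
  gradSq n v + lpP n 3 v - a₂ * lpP n 4 v - lpP n 5 v

noncomputable def Jf (n : ℕ) (v : EuclideanSpace ℝ (Fin n) → ℝ) : ℝ :=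
  (1/4) * gradSq n v + (1/12) * lpP n 3 v + (1/20) * lpP n 5 v

/-- Action functional `S`. -/
noncomputable def Sf (n : ℕ) (a₂ : ℝ) (v : EuclideanSpace ℝ (Fin n) → ℝ) : ℝ :=
  (1/2) * gradSq n v + (1/3) * lpP n 3 v - (a₂/4) * lpP n 4 v - (1/5) * lpP n 5 v

/-- Pohozhaev functional `P`. -/
noncomputable def Pf (n : ℕ) (a₂ : ℝ) (v : EuclideanSpace ℝ (Fin n) → ℝ) : ℝ :=
  gradSq n v + ((n : ℝ)/6) * lpP n 3 v - ((n : ℝ) * a₂/4) * lpP n 4 v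
    - (3 * (n : ℝ)/10) * lpP n 5 v

/-- Membership in `X = Ḣ¹ ∩ L³` together with the integrabilities needed to make
all the functionals well defined. -/
def Adm (n : ℕ) (v : EuclideanSpace ℝ (Fin n) → ℝ) : Prop :=
  Differentiable ℝ v ∧ MemLp (fun x => ‖fderiv ℝ v x‖) 2 volume ∧
    MemLp v 3 volume ∧ MemLp v 4 volume ∧ MemLp v 5 volume

/-- The rescaling `v^λ(x) = λ^{n/2} v (λ x)`. -/
noncomputable def scal (n : ℕ) (l : ℝ) (v : EuclideanSpace ℝ (Fin n) → ℝ) :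
    EuclideanSpace ℝ (Fin n) → ℝ :=
  fun x => l ^ ((n : ℝ)/2) * v (l • x)

/-! Under `v ↦ v^λ` the four terms of `S` scale like `λ^2, λ^{n/2}, λ^n, λ^{3n/2}`, so
`λ ↦ S(v^λ)` is a finite sum of real powers of `λ` near `λ = 1` and its second derivative there is
read off termwise. In dimension 3, subtracting `2 P(φ) = 0` cancels the `L⁴` term and leaves a sum
of nonpositive terms, the `L³` one strictly negative because `φ` is continuous and not zero. -/

open Filter Topology

section PowerProfile

variable {ι : Type*} (s : Finset ι) (c p : ι → ℝ)

theorem hasDerivAt_sum_mul_rpow {l : ℝ} (hl : 0 < l) :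
    HasDerivAt (fun y => ∑ i ∈ s, c i * y ^ p i) (∑ i ∈ s, c i * p i * l ^ (p i - 1)) l :=
  HasDerivAt.fun_sum fun i _ => by
    simpa [mul_assoc] using (Real.hasDerivAt_rpow_const (p := p i) (Or.inl hl.ne')).const_mul (c i)

theorem deriv_deriv_sum_mul_rpow_one :
    deriv (deriv fun y => ∑ i ∈ s, c i * y ^ p i) 1 = ∑ i ∈ s, c i * p i * (p i - 1) := by
  have h : deriv (fun y => ∑ i ∈ s, c i * y ^ p i)
      =ᶠ[𝓝 1] fun y => ∑ i ∈ s, (c i * p i) * y ^ (p i - 1) :=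
    eventually_of_mem (Ioi_mem_nhds one_pos) fun l hl => (hasDerivAt_sum_mul_rpow s c p hl).deriv
  rw [h.deriv_eq, (hasDerivAt_sum_mul_rpow s (fun i => c i * p i) (fun i => p i - 1) one_pos).deriv]
  simp

end PowerProfile

section Scaling

variable {n : ℕ} {v : EuclideanSpace ℝ (Fin n) → ℝ} {l : ℝ}

theorem integral_comp_smul_eq_rpow (f : EuclideanSpace ℝ (Fin n) → ℝ) (hl : 0 < l) :
    ∫ x, f (l • x) = l ^ (-(n : ℝ)) * ∫ x, f x := by
  rw [Measure.integral_comp_smul_of_nonneg volume f l (hR := hl.le), finrank_euclideanSpace_fin,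
    smul_eq_mul, Real.rpow_neg hl.le, Real.rpow_natCast]

theorem rpow_natCast_div_two_sq (hl : 0 ≤ l) (n : ℕ) : (l ^ ((n : ℝ) / 2)) ^ 2 = l ^ n := by
  rw [← Real.rpow_mul_natCast hl, ← Real.rpow_natCast]; congr 1; push_cast; ring

theorem hasFDerivAt_scal {x : EuclideanSpace ℝ (Fin n)} (hd : DifferentiableAt ℝ v (l • x)) :
    HasFDerivAt (scal n l v) ((l ^ ((n : ℝ) / 2) * l) • fderiv ℝ v (l • x)) x := by
  have h := (hd.hasFDerivAt.comp x ((hasFDerivAt_id x).const_smul l)).const_mul (l ^ ((n : ℝ) / 2))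
  rw [mul_smul]
  refine h.congr_fderiv ?_
  ext y; simp

theorem gradSq_scal (hd : Differentiable ℝ v) (hl : 0 < l) :
    gradSq n (scal n l v) = l ^ (2 : ℝ) * gradSq n v := by
  have hnorm : ∀ x, ‖fderiv ℝ (scal n l v) x‖ ^ 2 = l ^ (n + 2) * ‖fderiv ℝ v (l • x)‖ ^ 2 := by
    intro x
    rw [(hasFDerivAt_scal (hd _)).fderiv, norm_smul, Real.norm_eq_abs,
      abs_of_nonneg (by positivity), mul_pow, mul_pow, rpow_natCast_div_two_sq hl.le, pow_add]
  simp_rw [gradSq, hnorm]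
  rw [integral_const_mul, integral_comp_smul_eq_rpow (fun y => ‖fderiv ℝ v y‖ ^ 2) hl, ← mul_assoc,
    ← Real.rpow_natCast, ← Real.rpow_add hl]
  push_cast; ring_nf

theorem lpP_scal (hl : 0 < l) (p : ℕ) :
    lpP n p (scal n l v) = l ^ ((n : ℝ) * p / 2 - n) * lpP n p v := by
  have habs : ∀ x, |scal n l v x| ^ p = l ^ ((n : ℝ) * p / 2) * |v (l • x)| ^ p := by
    intro x
    rw [scal, abs_mul, mul_pow, abs_of_nonneg (by positivity), ← Real.rpow_natCast,
      ← Real.rpow_mul hl.le]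
    ring_nf
  simp_rw [lpP, habs]
  rw [integral_const_mul, integral_comp_smul_eq_rpow (fun y => |v y| ^ p) hl, ← mul_assoc,
    ← Real.rpow_add hl]
  ring_nf

end Scaling

theorem Sf_scal_eq_sum (n : ℕ) (a₂ : ℝ) {v : EuclideanSpace ℝ (Fin n) → ℝ}
    (hd : Differentiable ℝ v) {l : ℝ} (hl : 0 < l) :
    Sf n a₂ (scal n l v) = ∑ i : Fin 4,
      ![1 / 2 * gradSq n v, 1 / 3 * lpP n 3 v, -(a₂ / 4) * lpP n 4 v, -(1 / 5) * lpP n 5 v] i *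
        l ^ ![2, (n : ℝ) / 2, n, 3 * (n : ℝ) / 2] i := by
  simp only [Sf, gradSq_scal hd hl, lpP_scal hl, Fin.sum_univ_four, Matrix.cons_val]
  ring_nf

theorem deriv_deriv_Sf_scal_one (n : ℕ) (a₂ : ℝ) {v : EuclideanSpace ℝ (Fin n) → ℝ}
    (hd : Differentiable ℝ v) :
    deriv (deriv fun l => Sf n a₂ (scal n l v)) 1 = gradSq n v + (n * (n - 2) / 12) * lpP n 3 v
      - (a₂ * n * (n - 1) / 4) * lpP n 4 v - (3 * n * (3 * n - 2) / 20) * lpP n 5 v := by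
  have h : (fun l => Sf n a₂ (scal n l v)) =ᶠ[𝓝 1] _ :=
    eventually_of_mem (Ioi_mem_nhds one_pos) fun l hl => Sf_scal_eq_sum n a₂ hd hl
  rw [h.deriv.deriv_eq, deriv_deriv_sum_mul_rpow_one, Fin.sum_univ_four]
  simp only [Fin.isValue, Matrix.cons_val]
  ring

theorem lpP_nonneg (n p : ℕ) (v : EuclideanSpace ℝ (Fin n) → ℝ) : 0 ≤ lpP n p v :=
  integral_nonneg fun _ => by positivity

theorem gradSq_nonneg (n : ℕ) (v : EuclideanSpace ℝ (Fin n) → ℝ) : 0 ≤ gradSq n v :=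
  integral_nonneg fun _ => by positivity

theorem lpP_pos {n p : ℕ} {v : EuclideanSpace ℝ (Fin n) → ℝ} (hc : Continuous v) (hv : v ≠ 0)
    (hp : p ≠ 0) (hLp : MemLp v p volume) : 0 < lpP n p v := by
  obtain ⟨x, hx⟩ := Function.ne_iff.mp hv
  refine integral_pos_of_integrable_nonneg_nonzero (x := x) (by fun_prop) ?_ (fun _ => by positivity)
    (pow_ne_zero p (abs_ne_zero.mpr hx))
  simpa using hLp.integrable_norm_pow hp

theorem stmt16_general (a₂ : ℝ) (φ : EuclideanSpace ℝ (Fin 3) → ℝ)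
    (hφ : Adm 3 φ) (hφ0 : φ ≠ 0)
    (hP : Pf 3 a₂ φ = 0) :
    deriv (deriv (fun l : ℝ => Sf 3 a₂ (scal 3 l φ))) 1
        = gradSq 3 φ + (1/4) * lpP 3 3 φ - (3*a₂/2) * lpP 3 4 φ
            - (63/20) * lpP 3 5 φ ∧
      gradSq 3 φ + (1/4) * lpP 3 3 φ - (3*a₂/2) * lpP 3 4 φ - (63/20) * lpP 3 5 φ
        = -(gradSq 3 φ) - (3/4) * lpP 3 3 φ - (27/20) * lpP 3 5 φ ∧
      -(gradSq 3 φ) - (3/4) * lpP 3 3 φ - (27/20) * lpP 3 5 φ < 0 := by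
  obtain ⟨hd, -, hL3, -, -⟩ := hφ
  have hA := lpP_pos hd.continuous hφ0 three_ne_zero hL3
  have hG := gradSq_nonneg 3 φ
  have hC := lpP_nonneg 3 5 φ
  refine ⟨?_, ?_, by linarith⟩
  · rw [deriv_deriv_Sf_scal_one 3 a₂ hd]
    push_cast
    ring
  · rw [Pf] at hP
    linear_combination 2 * hP

theorem stmt16 (a₂ : ℝ) (φ : EuclideanSpace ℝ (Fin 3) → ℝ)
    (hφ : Adm 3 φ) (hL2 : MemLp φ 2 volume) (hφ0 : φ ≠ 0)
    (hP : Pf 3 a₂ φ = 0) :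
    deriv (deriv (fun l : ℝ => Sf 3 a₂ (scal 3 l φ))) 1
        = gradSq 3 φ + (1/4) * lpP 3 3 φ - (3*a₂/2) * lpP 3 4 φ
            - (63/20) * lpP 3 5 φ ∧
      gradSq 3 φ + (1/4) * lpP 3 3 φ - (3*a₂/2) * lpP 3 4 φ - (63/20) * lpP 3 5 φ
        = -(gradSq 3 φ) - (3/4) * lpP 3 3 φ - (27/20) * lpP 3 5 φ ∧
      -(gradSq 3 φ) - (3/4) * lpP 3 3 φ - (27/20) * lpP 3 5 φ < 0 :=
  stmt16_general a₂ φ hφ hφ0 hP
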